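/- Let {C_1,...,C_K} be a (K,K,N)-CCC and let b_1,...,b_r be unimodular sequences of length P that are mutually orthogonal to conjugates (i.e., Σ_p (b_i)_p · conj((b_j)_p) = 0 for i ≠ j). Then the rK codes Z_{(q-1)K+k} = C_k ⊗ b_q form a type-II (rK, K, NP-P+1, NP)-ZCCS: each code has zero autocorrelation sum for P-1 < |τ| < NP, and any two distinct codes have zero cross-correlation sum for |τ| ≤ P-1 as well as zero at shift 0 (in fact zero for all shifts in the required ZCZ region and at τ=0). -/

import Mathlib

open Finset

/-- Aperiodic cross-correlation of length-`L` sequences `x, y` at integer shift `τ`. -/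
noncomputable def acc (L : ℕ) (x y : ℕ → ℂ) (τ : ℤ) : ℂ :=
  if 0 ≤ τ ∧ τ < (L : ℤ) then
    ∑ i ∈ Finset.range (L - τ.toNat), x (i + τ.toNat) * (starRingEnd ℂ) (y i)
  else if -(L : ℤ) < τ ∧ τ < 0 then
    ∑ i ∈ Finset.range (L - (-τ).toNat), x i * (starRingEnd ℂ) (y (i + (-τ).toNat))
  else 0

/-- Aperiodic autocorrelation. -/
noncomputable def aac (L : ℕ) (x : ℕ → ℂ) (τ : ℤ) : ℂ := acc L x x τ

/-- Kronecker product of a sequence with a length-`P` sequence: `(a ⊗ b)_(nP+p) = a_n b_p`. -/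
noncomputable def kron (P : ℕ) (a b : ℕ → ℂ) : ℕ → ℂ := fun n => a (n / P) * b (n % P)

/-- Aperiodic cross-correlation sum of two codes (row-wise sum). -/
noncomputable def ccs {M : ℕ} (L : ℕ) (A B : Fin M → ℕ → ℂ) (τ : ℤ) : ℂ :=
  ∑ ν, acc L (A ν) (B ν) τ

lemma acc_nonneg_eq (L s : ℕ) (hs : s ≤ L) (x y : ℕ → ℂ) :
    acc L x y (s : ℤ) = ∑ i ∈ Finset.range (L - s), x (i + s) * (starRingEnd ℂ) (y i) := by
  unfold acc
  rcases lt_or_eq_of_le hs with h | h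
  · rw [if_pos ⟨Int.natCast_nonneg s, by exact_mod_cast h⟩]
    simp
  · subst h
    rw [if_neg (by omega), if_neg (by omega)]
    simp

lemma acc_neg_eq (L u : ℕ) (hu0 : 0 < u) (hu : u ≤ L) (x y : ℕ → ℂ) :
    acc L x y (-(u : ℤ)) = ∑ i ∈ Finset.range (L - u), x i * (starRingEnd ℂ) (y (i + u)) := by
  unfold acc
  rcases lt_or_eq_of_le hu with h | h
  · rw [if_neg (by omega), if_pos ⟨by omega, by omega⟩]
    simp
  · subst h
    rw [if_neg (by omega), if_neg (by omega)]
    simp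

lemma acc_big (L : ℕ) (x y : ℕ → ℂ) (τ : ℤ) (h : (L : ℤ) ≤ |τ|) : acc L x y τ = 0 := by
  unfold acc
  rcases abs_cases τ with ⟨he, _⟩ | ⟨he, _⟩ <;>
    rw [if_neg (by omega), if_neg (by omega)]

lemma acc_conj (L : ℕ) (x y : ℕ → ℂ) (τ : ℤ) :
    acc L x y (-τ) = (starRingEnd ℂ) (acc L y x τ) := by
  have main : ∀ (x y : ℕ → ℂ) (τ : ℤ), 0 ≤ τ → acc L x y (-τ) = (starRingEnd ℂ) (acc L y x τ) := by
    intro x y τ hτ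
    unfold acc
    rcases eq_or_lt_of_le hτ with h | h
    · subst h
      simp
      split_ifs with h1
      · rw [map_sum]; exact Finset.sum_congr rfl (fun i _ => by rw [map_mul, mul_comm]; simp)
      · simp
    · rcases lt_or_ge τ (L : ℤ) with h2 | h2
      · rw [if_neg (by omega), if_pos ⟨by omega, by omega⟩, if_pos ⟨hτ, h2⟩, map_sum]
        simp only [neg_neg]
        exact Finset.sum_congr rfl (fun i _ => by rw [map_mul, mul_comm]; simp)
      · rw [if_neg (by omega), if_neg (by omega), if_neg (by omega), if_neg (by omega)]
        simp
  rcases le_or_gt 0 τ with h | h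
  · exact main x y τ h
  · have := main y x (-τ) (by omega)
    rw [neg_neg] at this
    rw [this]
    simp

lemma ccs_conj {M : ℕ} (L : ℕ) (A B : Fin M → ℕ → ℂ) (τ : ℤ) :
    ccs L A B (-τ) = (starRingEnd ℂ) (ccs L B A τ) := by
  unfold ccs
  rw [map_sum]
  exact Finset.sum_congr rfl (fun ν _ => acc_conj L _ _ τ)

lemma ccs_zero_len {M : ℕ} (A B : Fin M → ℕ → ℂ) (τ : ℤ) : ccs 0 A B τ = 0 := by
  unfold ccs acc
  simp only [Nat.cast_zero]
  refine Finset.sum_eq_zero fun ν _ => ?_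
  rw [if_neg (by omega), if_neg (by omega)]

lemma sum_range_add'' (f : ℕ → ℂ) (m n : ℕ) :
    ∑ i ∈ Finset.range (m + n), f i
      = ∑ i ∈ Finset.range m, f i + ∑ i ∈ Finset.range n, f (m + i) := by
  induction n with
  | zero => simp
  | succ n ih => rw [← Nat.add_assoc, Finset.sum_range_succ, ih, Finset.sum_range_succ]; ring

lemma sum_range_mul' (f : ℕ → ℂ) (m P : ℕ) :
    ∑ i ∈ Finset.range (m * P), f i
      = ∑ n ∈ Finset.range m, ∑ p ∈ Finset.range P, f (n * P + p) := by
  induction m with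
  | zero => simp
  | succ m ih =>
      rw [Nat.succ_mul, sum_range_add'' f (m*P) P, ih, Finset.sum_range_succ]

lemma divP_helper {P : ℕ} (hP : 0 < P) (n p : ℕ) (hp : p < P) : (n * P + p) / P = n := by
  rw [add_comm, Nat.add_mul_div_right _ _ hP, Nat.div_eq_of_lt hp, zero_add]

lemma modP_helper {P : ℕ} (n p : ℕ) (hp : p < P) : (n * P + p) % P = p := by
  rw [add_comm, Nat.add_mul_mod_self_right, Nat.mod_eq_of_lt hp]

lemma acc_kron (M P s t : ℕ) (hP : 0 < P) (ht : t < P)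
    (a a' u v : ℕ → ℂ) :
    acc ((M + s + 1) * P) (kron P a u) (kron P a' v) ((s * P + t : ℕ) : ℤ)
      = acc (M + s + 1) a a' (s : ℤ) * acc P u v (t : ℤ)
        + acc (M + s + 1) a a' ((s : ℤ) + 1) * acc P u v ((t : ℤ) - (P : ℤ)) := by
  have hle : s * P + t ≤ (M + s + 1) * P := by
    calc s * P + t ≤ s * P + P := by omega
    _ = (s + 1) * P := by ring
    _ ≤ (M + s + 1) * P := Nat.mul_le_mul_right P (by omega)
  have hlen : (M + s + 1) * P - (s * P + t) = M * P + (P - t) := by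
    zify [hle, le_of_lt ht]; ring
  rw [acc_nonneg_eq _ _ hle, hlen,
      acc_nonneg_eq (M+s+1) s (by omega),
      show ((s:ℤ)+1) = ((s+1 : ℕ) : ℤ) by push_cast; ring,
      acc_nonneg_eq (M+s+1) (s+1) (by omega),
      acc_nonneg_eq P t (le_of_lt ht),
      show ((t:ℤ) - (P:ℤ)) = -(((P - t : ℕ)) : ℤ) by omega,
      acc_neg_eq P (P-t) (by omega) (by omega),
      show M+s+1-s = M+1 by omega, show M+s+1-(s+1) = M by omega,
      show P-(P-t) = t by omega]
  rw [sum_range_add'' _ (M*P) (P-t), sum_range_mul' _ M P,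
      Finset.sum_mul_sum, Finset.sum_mul_sum]
  have hsplit : ∀ n : ℕ,
      (∑ p ∈ Finset.range P,
        kron P a u (n*P+p + (s*P+t)) * (starRingEnd ℂ) (kron P a' v (n*P+p)))
      = (∑ p ∈ Finset.range (P-t),
          kron P a u (n*P+p + (s*P+t)) * (starRingEnd ℂ) (kron P a' v (n*P+p)))
        + ∑ p ∈ Finset.range t,
            kron P a u (n*P+((P-t)+p) + (s*P+t)) * (starRingEnd ℂ) (kron P a' v (n*P+((P-t)+p))) := by
    intro n
    have h := sum_range_add''
      (fun p => kron P a u (n*P+p + (s*P+t)) * (starRingEnd ℂ) (kron P a' v (n*P+p))) (P-t) t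
    rw [show (P-t)+t = P by omega] at h
    exact h
  simp only [hsplit]
  rw [Finset.sum_add_distrib, add_right_comm,
      ← Finset.sum_range_succ (fun n => ∑ p ∈ Finset.range (P-t),
          kron P a u (n*P+p + (s*P+t)) * (starRingEnd ℂ) (kron P a' v (n*P+p))) M]
  congr 1
  · refine Finset.sum_congr rfl fun n _ => Finset.sum_congr rfl fun p hp => ?_
    rw [Finset.mem_range] at hp
    have e : n*P+p + (s*P+t) = (n+s)*P + (p+t) := by ring
    unfold kron
    rw [e, divP_helper hP _ _ (by omega), modP_helper _ _ (by omega),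
        divP_helper hP _ _ (by omega), modP_helper _ _ (by omega), map_mul]
    ring
  · refine Finset.sum_congr rfl fun n _ => Finset.sum_congr rfl fun p hp => ?_
    rw [Finset.mem_range] at hp
    have e : n*P+((P-t)+p) + (s*P+t) = (n+s+1)*P + p := by zify [le_of_lt ht]; ring
    unfold kron
    rw [e, divP_helper hP _ _ (by omega), modP_helper _ _ (by omega),
        divP_helper hP _ _ (by omega), modP_helper _ _ (by omega), map_mul,
        add_comm p (P-t)]
    ring

lemma ccs_kron {K : ℕ} (M P s t : ℕ) (hP : 0 < P) (ht : t < P)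
    (A A' : Fin K → ℕ → ℂ) (u v : ℕ → ℂ) :
    ccs ((M + s + 1) * P) (fun ν => kron P (A ν) u) (fun ν => kron P (A' ν) v)
        ((s * P + t : ℕ) : ℤ)
      = ccs (M + s + 1) A A' (s : ℤ) * acc P u v (t : ℤ)
        + ccs (M + s + 1) A A' ((s : ℤ) + 1) * acc P u v ((t : ℤ) - (P : ℤ)) := by
  unfold ccs
  rw [Finset.sum_mul, Finset.sum_mul, ← Finset.sum_add_distrib]
  exact Finset.sum_congr rfl fun ν _ => acc_kron M P s t hP ht (A ν) (A' ν) u v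

theorem stmt12 (K N P r : ℕ) (C : Fin K → Fin K → ℕ → ℂ)
    (hU : ∀ i ν, ∀ n < N, ‖C i ν n‖ = 1)
    (hauto : ∀ i, ∀ τ : ℤ, τ ≠ 0 → ccs N (C i) (C i) τ = 0)
    (hcross : ∀ i j, i ≠ j → ∀ τ : ℤ, ccs N (C i) (C j) τ = 0)
    (b : Fin r → ℕ → ℂ) (hb : ∀ q, ∀ p < P, ‖b q p‖ = 1)
    (horth : ∀ q q', q ≠ q' →
        ∑ p ∈ Finset.range P, b q p * (starRingEnd ℂ) (b q' p) = 0)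
    (Z : Fin r × Fin K → Fin K → ℕ → ℂ)
    (hZ : ∀ q k ν, Z (q, k) ν = kron P (C k ν) (b q)) :
    (∀ w, ∀ τ : ℤ, (P : ℤ) - 1 < |τ| → |τ| < (N : ℤ) * P →
        ccs (N * P) (Z w) (Z w) τ = 0) ∧
    (∀ w w', w ≠ w' →
        ccs (N * P) (Z w) (Z w') 0 = 0 ∧
        ∀ τ : ℤ, (P : ℤ) - 1 < |τ| → |τ| < (N : ℤ) * P →
          ccs (N * P) (Z w) (Z w') τ = 0) := by
  rcases Nat.eq_zero_or_pos (N * P) with h0 | hpos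
  · exact ⟨fun w τ _ _ => by rw [h0]; exact ccs_zero_len _ _ _,
      fun w w' _ => ⟨by rw [h0]; exact ccs_zero_len _ _ _,
        fun τ _ _ => by rw [h0]; exact ccs_zero_len _ _ _⟩⟩
  have hP : 0 < P := by
    rcases Nat.eq_zero_or_pos P with h | h
    · simp [h] at hpos
    · exact h
  have key : ∀ (q q' : Fin r) (k k' : Fin K) (τ : ℤ), 0 ≤ τ → τ < (N : ℤ) * P →
      (k ≠ k' ∨ (P : ℤ) ≤ τ ∨ (τ = 0 ∧ q ≠ q')) →
      ccs (N * P) (Z (q, k)) (Z (q', k')) τ = 0 := by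
    intro q q' k k' τ hτ0 hτN hcase
    obtain ⟨n, rfl⟩ : ∃ n : ℕ, τ = (n : ℤ) := ⟨τ.toNat, by omega⟩
    set s := n / P with hsdef
    set t := n % P with htdef
    have hn : n = s * P + t := by rw [hsdef, htdef, Nat.mul_comm]; exact (Nat.div_add_mod n P).symm
    have ht : t < P := Nat.mod_lt n hP
    have hnN : n < N * P := by exact_mod_cast (by push_cast at hτN ⊢; exact hτN : (n : ℤ) < ((N*P : ℕ) : ℤ))
    have hs : s < N := Nat.div_lt_of_lt_mul (by rw [Nat.mul_comm] at hnN; exact hnN)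
    obtain ⟨M, hM⟩ : ∃ M, N = M + s + 1 := ⟨N - s - 1, by omega⟩
    have hZeq : ccs (N * P) (Z (q, k)) (Z (q', k')) (n : ℤ)
        = ccs N (C k) (C k') (s : ℤ) * acc P (b q) (b q') (t : ℤ)
          + ccs N (C k) (C k') ((s : ℤ) + 1) * acc P (b q) (b q') ((t : ℤ) - (P : ℤ)) := by
      have h1 : (Z (q, k)) = fun ν => kron P (C k ν) (b q) := funext (hZ q k)
      have h2 : (Z (q', k')) = fun ν => kron P (C k' ν) (b q') := funext (hZ q' k')
      rw [h1, h2, hn, hM]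
      exact ccs_kron M P s t hP ht _ _ _ _
    rw [hZeq]
    rcases hcase with hk | hτP | ⟨hτz, hq⟩
    · rw [hcross k k' hk, hcross k k' hk, zero_mul, zero_mul, add_zero]
    · have hPn : P ≤ n := by exact_mod_cast hτP
      have hs1 : 1 ≤ s := (Nat.one_le_div_iff hP).mpr hPn
      rcases eq_or_ne k k' with rfl | hk
      · rw [hauto k _ (by exact_mod_cast Nat.one_le_iff_ne_zero.mp hs1),
            hauto k _ (by positivity), zero_mul, zero_mul, add_zero]
      · rw [hcross k k' hk, hcross k k' hk, zero_mul, zero_mul, add_zero]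
    · have hn0 : n = 0 := by exact_mod_cast hτz
      have hs0 : s = 0 := by simp [hsdef, hn0]
      have ht0 : t = 0 := by simp [htdef, hn0]
      rw [hs0, ht0]
      have hacc0 : acc P (b q) (b q') ((0 : ℕ) : ℤ)
          = ∑ p ∈ Finset.range P, b q p * (starRingEnd ℂ) (b q' p) := by
        rw [acc_nonneg_eq P 0 (by omega)]
        simp
      have haccP : acc P (b q) (b q') (((0 : ℕ) : ℤ) - (P : ℤ)) = 0 := by
        apply acc_big
        simp [abs_of_nonpos]
      rw [hacc0, horth q q' hq, haccP, mul_zero, mul_zero, add_zero]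
  have hNP0 : (0 : ℤ) < (N : ℤ) * P := by exact_mod_cast (by exact_mod_cast hpos : (0:ℤ) < ((N*P : ℕ) : ℤ))
  constructor
  · rintro ⟨q, k⟩ τ h1 h2
    rcases le_or_gt 0 τ with hτ | hτ
    · exact key q q k k τ hτ (by rwa [abs_of_nonneg hτ] at h2)
        (Or.inr (Or.inl (by rw [abs_of_nonneg hτ] at h1; omega)))
    · have e : τ = -(-τ) := by ring
      rw [e, ccs_conj,
        key q q k k (-τ) (by omega) (by rwa [abs_of_neg hτ] at h2)
          (Or.inr (Or.inl (by rw [abs_of_neg hτ] at h1; omega))), map_zero]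
  · rintro ⟨q, k⟩ ⟨q', k'⟩ hw
    constructor
    · rcases eq_or_ne k k' with rfl | hk
      · have hq : q ≠ q' := by
          intro h
          exact hw (by rw [h])
        exact key q q' k k 0 le_rfl hNP0 (Or.inr (Or.inr ⟨rfl, hq⟩))
      · exact key q q' k k' 0 le_rfl hNP0 (Or.inl hk)
    · intro τ h1 h2
      rcases le_or_gt 0 τ with hτ | hτ
      · exact key q q' k k' τ hτ (by rwa [abs_of_nonneg hτ] at h2)
          (Or.inr (Or.inl (by rw [abs_of_nonneg hτ] at h1; omega)))
      · have e : τ = -(-τ) := by ring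
        rw [e, ccs_conj,
          key q' q k' k (-τ) (by omega) (by rwa [abs_of_neg hτ] at h2)
            (Or.inr (Or.inl (by rw [abs_of_neg hτ] at h1; omega))), map_zero]
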